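/- No deterministic local strategy wins the three-player contextual triangle game on all eight inputs; consequently, for input triples drawn uniformly at random from {0,1}^3, every deterministic local strategy wins with probability at most 7/8. -/

import Mathlib

/-!
A parity count. On input `110` and its cyclic shifts, rule (iv) gives three equations whose sum is
`Σ a + Σ d + Σ e = 1`. But rule (ii) on `000` gives `Σ a = 0`, and rules (i) and (iii) on `111`
give `Σ (d + e) = 0`. Hence every strategy loses on at least one of the eight inputs.
-/

/-- A deterministic local strategy in the three-player contextual triangle game:
player `p` holds fixed bits `a p, b0 p, c p, d p, b1 p, e p`; on input `x p = 0`
they output `(a p, b0 p, c p)` and on input `x p = 1` they output `(d p, b1 p, e p)`.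
`TriWin a b0 c d b1 e x` says the strategy wins on global input `x`. -/
def TriWin (a b0 c d b1 e : Fin 3 → ZMod 2) (x : Fin 3 → ZMod 2) : Prop :=
  -- (i) the sum of all nine output bits is 0
  (∑ p : Fin 3, ((if x p = 0 then a p else d p) + (if x p = 0 then b0 p else b1 p)
      + (if x p = 0 then c p else e p)) = 0)
  -- (ii) if x = (0,0,0) then a₁ + a₂ + a₃ = 0
  ∧ (x = (fun _ => 0) → a 0 + a 1 + a 2 = 0)
  -- (iii) b₁^{x₁} + b₂^{x₂} + b₃^{x₃} = 0
  ∧ (∑ p : Fin 3, (if x p = 0 then b0 p else b1 p)) = 0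
  -- (iv) for each p with x_p = 1, x_{p+1} = 1, x_{p+2} = 0: d_p + e_{p+1} + a_{p+2} = 1
  ∧ (∀ p : Fin 3, x p = 1 → x (p + 1) = 1 → x (p + 2) = 0 →
      d p + e (p + 1) + a (p + 2) = 1)

instance (a b0 c d b1 e : Fin 3 → ZMod 2) : DecidablePred (TriWin a b0 c d b1 e) := fun x => by
  unfold TriWin; infer_instance

open Finset

theorem card_filter_le_card_sub_one {α : Type*} [Fintype α] {P : α → Prop} [DecidablePred P]
    (h : ¬ ∀ x, P x) : #(univ.filter P) ≤ Fintype.card α - 1 := by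
  push Not at h
  obtain ⟨x, hx⟩ := h
  have := card_lt_card (filter_ssubset.mpr ⟨x, mem_univ x, hx⟩)
  rw [card_univ] at this
  omega

section TriWin

variable {a b0 c d b1 e : Fin 3 → ZMod 2}

theorem TriWin.sum_a_eq_zero (h : TriWin a b0 c d b1 e 0) : a 0 + a 1 + a 2 = 0 :=
  h.2.1 rfl

theorem TriWin.sum_d_add_e_eq_zero (h : TriWin a b0 c d b1 e 1) : ∑ p, (d p + e p) = 0 := by
  obtain ⟨hall, -, hb, -⟩ := h
  simp only [Pi.one_apply, one_ne_zero, if_false] at hall hb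
  calc ∑ p, (d p + e p) = ∑ p, (d p + b1 p + e p) - ∑ p, b1 p := by
        rw [← sum_sub_distrib]; congr 1; ext p; ring
    _ = 0 := by rw [hall, hb, sub_zero]

theorem TriWin.cyclic_constraint (p : Fin 3)
    (h : TriWin a b0 c d b1 e (fun q => if q = p + 2 then 0 else 1)) :
    d p + e (p + 1) + a (p + 2) = 1 :=
  h.2.2.2 p (by fin_cases p <;> decide) (by fin_cases p <;> decide) (by simp)

theorem not_forall_triWin : ¬ ∀ x, TriWin a b0 c d b1 e x := by
  intro h
  have ha := (h 0).sum_a_eq_zero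
  have hde := (h 1).sum_d_add_e_eq_zero
  have h0 := (h _).cyclic_constraint 0
  have h1 := (h _).cyclic_constraint 1
  have h2 := (h _).cyclic_constraint 2
  simp only [Fin.sum_univ_three] at hde
  simp only [Fin.reduceAdd] at h0 h1 h2
  exact one_ne_zero <| show (1 : ZMod 2) = 0 by
    linear_combination (norm := (ring_nf; reduce_mod_char)) h0 + h1 + h2 - ha - hde

end TriWin

theorem no_perfect_classical_strategy (a b0 c d b1 e : Fin 3 → ZMod 2) :
    (¬ ∀ x : Fin 3 → ZMod 2, TriWin a b0 c d b1 e x) ∧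
    ((Finset.univ.filter (fun x => TriWin a b0 c d b1 e x)).card : ℝ) /
        (Fintype.card (Fin 3 → ZMod 2) : ℝ) ≤ 7 / 8 := by
  refine ⟨not_forall_triWin, ?_⟩
  have hcard : Fintype.card (Fin 3 → ZMod 2) = 8 := rfl
  have hwins : #(univ.filter (TriWin a b0 c d b1 e)) ≤ 7 := by
    simpa [hcard] using card_filter_le_card_sub_one not_forall_triWin
  rw [hcard, Nat.cast_ofNat, div_le_div_iff_of_pos_right (by norm_num)]
  exact_mod_cast hwins
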